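/- arXiv:2308.04208 — 2 statements merged into one kernel-verified Lean document; each statement's English description precedes it below -/
import Mathlib

section
/- Let g, h : (1,∞) → ℝ be monotone nondecreasing functions such that g(r) ≤ h(r) for all r outside an exceptional set E ⊂ (1,∞) of finite logarithmic measure. Then for any d > 1 there exists r₀ > 1 such that g(r) ≤ h(d·r) for all r > r₀. -/
/-!
The interval `[r, d r]` has logarithmic measure `log d`, while the part of `E` beyond `r` has
logarithmic measure tending to `0`. So for large `r` some `s ∈ [r, d r]` lies outside `E`, and
`g r ≤ g s ≤ h s ≤ h (d r)`.
-/

open MeasureTheory Filter Set Topology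
open scoped ENNReal

lemma tendsto_setLIntegral_inter_Ici_atTop {μ : Measure ℝ} [SFinite μ] {f : ℝ → ℝ≥0∞}
    {E : Set ℝ} (hE : ∫⁻ t in E, f t ∂μ ≠ ∞) :
    Tendsto (fun R => ∫⁻ t in E ∩ Ici R, f t ∂μ) atTop (𝓝 0) := by
  set ν := (μ.restrict E).withDensity f
  have hν : ∀ R, ν (Ici R) = ∫⁻ t in E ∩ Ici R, f t ∂μ := fun R => by
    rw [withDensity_apply' _ _, Measure.restrict_restrict measurableSet_Ici, inter_comm]
  have hempty : ⋂ R : ℝ, Ici R = ∅ :=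
    eq_empty_of_forall_notMem fun x hx => (lt_add_one x).not_ge (mem_iInter.1 hx (x + 1))
  have hfin : ν (Ici 0) ≠ ∞ := by
    rw [hν]
    exact ne_top_of_le_ne_top hE (lintegral_mono_set inter_subset_left)
  have := tendsto_measure_iInter_atTop (μ := ν) (fun R => measurableSet_Ici.nullMeasurableSet)
    antitone_Ici ⟨0, hfin⟩
  rw [hempty, measure_empty] at this
  simpa only [Function.comp_def, hν] using this

lemma lintegral_Icc_ofReal_one_div {a b : ℝ} (ha : 0 < a) (hab : a ≤ b) :
    ∫⁻ t in Icc a b, ENNReal.ofReal (1 / t) = ENNReal.ofReal (Real.log (b / a)) := by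
  have hpos : ∀ t ∈ Icc a b, 0 < t := fun t ht => ha.trans_le ht.1
  have hint : IntegrableOn (fun t : ℝ => 1 / t) (Icc a b) :=
    (continuousOn_const.div continuousOn_id fun t ht => (hpos t ht).ne').integrableOn_Icc
  rw [← ofReal_integral_eq_lintegral_ofReal hint
    ((ae_restrict_mem measurableSet_Icc).mono fun t ht => (one_div_pos.2 (hpos t ht)).le),
    integral_Icc_eq_integral_Ioc, ← intervalIntegral.integral_of_le hab,
    integral_one_div fun h0 => (hpos 0 (by rwa [uIcc_of_le hab] at h0)).false]

lemma eventually_exists_notMem_Icc_mul {E : Set ℝ}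
    (hE : ∫⁻ t in E, ENNReal.ofReal (1 / t) < ∞) {d : ℝ} (hd : 1 < d) :
    ∀ᶠ r in atTop, ∃ s ∈ Icc r (d * r), s ∉ E := by
  have hlog : (0 : ℝ≥0∞) < ENNReal.ofReal (Real.log d) :=
    ENNReal.ofReal_pos.2 (Real.log_pos hd)
  filter_upwards [(tendsto_setLIntegral_inter_Ici_atTop hE.ne).eventually_lt_const hlog,
    eventually_gt_atTop 0] with r hsmall hr
  by_contra! hsub
  have hIcc := lintegral_Icc_ofReal_one_div hr (le_mul_of_one_le_left hr.le hd.le)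
  rw [mul_div_cancel_right₀ d hr.ne'] at hIcc
  have hmono : Icc r (d * r) ⊆ E ∩ Ici r := fun s hs => ⟨hsub s hs, hs.1⟩
  exact (lintegral_mono_set hmono).not_gt (hIcc ▸ hsmall)

theorem growth_comparison_log_general (g h : ℝ → ℝ)
    (hg : ∀ x y : ℝ, 1 < x → x ≤ y → g x ≤ g y)
    (hh : ∀ x y : ℝ, 1 < x → x ≤ y → h x ≤ h y)
    (E : Set ℝ)
    (hEm : ∫⁻ t in E, ENNReal.ofReal (1 / t) < ⊤)
    (hle : ∀ r > (1:ℝ), r ∉ E → g r ≤ h r) :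
    ∀ d > (1:ℝ), ∃ r₀ > (1:ℝ), ∀ r > r₀, g r ≤ h (d * r) := by
  intro d hd
  obtain ⟨r₁, hr₁⟩ := eventually_atTop.1 (eventually_exists_notMem_Icc_mul hEm hd)
  refine ⟨max r₁ 2, lt_max_of_lt_right one_lt_two, fun r hr => ?_⟩
  obtain ⟨s, ⟨hrs, hsd⟩, hsE⟩ := hr₁ r (le_max_left _ _ |>.trans hr.le)
  have hr1 : 1 < r := one_lt_two.trans ((le_max_right _ _).trans_lt hr)
  have hs1 : 1 < s := hr1.trans_le hrs
  calc g r ≤ g s := hg r s hr1 hrs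
    _ ≤ h s := hle s hs1 hsE
    _ ≤ h (d * r) := hh s (d * r) hs1 hsd

/-- Gundersen–Laine growth lemma, logarithmic measure version: if `g ≤ h` outside an
exceptional set `E ⊂ (1,∞)` of finite logarithmic measure, then for `d > 1`,
`g r ≤ h (d·r)` for all sufficiently large `r`. -/
theorem growth_comparison_log (g h : ℝ → ℝ)
    (hg : ∀ x y : ℝ, 1 < x → x ≤ y → g x ≤ g y)
    (hh : ∀ x y : ℝ, 1 < x → x ≤ y → h x ≤ h y)
    (E : Set ℝ) (hE : E ⊆ Set.Ioi 1)
    (hEm : ∫⁻ t in E, ENNReal.ofReal (1 / t) < ⊤)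
    (hle : ∀ r > (1:ℝ), r ∉ E → g r ≤ h r) :
    ∀ d > (1:ℝ), ∃ r₀ > (1:ℝ), ∀ r > r₀, g r ≤ h (d * r) :=
  growth_comparison_log_general g h hg hh E hEm hle
end

section
/- Let T : (0,∞) → ℝ be nondecreasing and unbounded, and let α, β, γ satisfy the standing growth conditions. If σ := limsup_{r→∞} α(log T(r)) / β(log γ(r)) is finite, then for every μ < σ there exists a set I ⊂ (1,∞) of infinite logarithmic measure such that α(log T(r)) > μ·β(log γ(r)) for all r ∈ I. -/
open Filter MeasureTheory
open scoped Topology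

/-- If `Q` holds frequently at `atTop` and `Q x` guarantees the bound on the whole
interval `[x, 2x]` together with `2 ≤ x`, then we can build a set of infinite
logarithmic measure. -/
lemma aux_union_of_frequently (G : ℝ → Prop)
    (Q : ℝ → Prop)
    (hfreq : ∃ᶠ x in atTop, Q x)
    (hQ : ∀ x, Q x → 2 ≤ x ∧ ∀ r ∈ Set.Icc x (2 * x), G r) :
    ∃ I : Set ℝ, I ⊆ Set.Ioi 1 ∧
      (∫⁻ r in I, ENNReal.ofReal (1 / r)) = ⊤ ∧
      ∀ r ∈ I, G r := by
  rw [Filter.frequently_atTop] at hfreq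
  -- build the sequence
  let c : ℕ → ℝ := fun n => Nat.rec (hfreq 2).choose
    (fun _ prev => (hfreq (2 * prev + 1)).choose) n
  have hc0 : Q (c 0) := (hfreq 2).choose_spec.2
  have hcs : ∀ n, c (n + 1) ≥ 2 * c n + 1 ∧ Q (c (n + 1)) := fun n =>
    ⟨(hfreq (2 * c n + 1)).choose_spec.1, (hfreq (2 * c n + 1)).choose_spec.2⟩
  have hQc : ∀ n, Q (c n) := fun n => by cases n with
    | zero => exact hc0
    | succ m => exact (hcs m).2
  have hc2 : ∀ n, 2 ≤ c n := fun n => (hQ _ (hQc n)).1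
  have hgrow : ∀ n, 2 * c n < c (n + 1) := fun n =>
    lt_of_lt_of_le (by linarith) (hcs n).1
  -- 2 * c m < c n whenever m < n
  have hsep : ∀ m n, m < n → 2 * c m < c n := by
    intro m n hmn
    induction n with
    | zero => omega
    | succ k ih =>
      rcases Nat.lt_succ_iff_lt_or_eq.mp hmn with h | h
      · have h1 := ih h
        have h2 := hgrow k
        have h3 := hc2 k
        linarith
      · subst h; exact hgrow m
  refine ⟨⋃ n, Set.Icc (c n) (2 * c n), ?_, ?_, ?_⟩
  · intro r hr
    rcases Set.mem_iUnion.mp hr with ⟨n, hn⟩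
    have := hc2 n
    exact Set.mem_Ioi.mpr (by linarith [hn.1])
  · have hmeas : ∀ n : ℕ, MeasurableSet (Set.Icc (c n) (2 * c n)) :=
      fun n => measurableSet_Icc
    have hdisj : Pairwise (Function.onFun Disjoint
        (fun n => Set.Icc (c n) (2 * c n))) := by
      intro m n hmn
      wlog h : m < n generalizing m n
      · exact (this hmn.symm (by omega)).symm
      refine Set.disjoint_left.mpr ?_
      intro x hx hx'
      have := hsep m n h
      have h1 := hx.2
      have h2 := hx'.1
      linarith
    rw [lintegral_iUnion hmeas hdisj]
    rw [eq_top_iff]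
    calc (⊤ : ENNReal) = ∑' _ : ℕ, ENNReal.ofReal (1 / 2) := by
          rw [ENNReal.tsum_const_eq_top_of_ne_zero]
          simp
      _ ≤ ∑' n, ∫⁻ r in Set.Icc (c n) (2 * c n), ENNReal.ofReal (1 / r) := by
          refine ENNReal.tsum_le_tsum fun n => ?_
          have hpos : (0:ℝ) < c n := lt_of_lt_of_le two_pos (hc2 n)
          have : ENNReal.ofReal (1 / 2)
              = ENNReal.ofReal (1 / (2 * c n)) * volume (Set.Icc (c n) (2 * c n)) := by
            rw [Real.volume_Icc, ← ENNReal.ofReal_mul (by positivity)]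
            congr 1
            field_simp
            ring
          rw [this, ← setLIntegral_const]
          refine setLIntegral_mono ((measurable_const.div measurable_id).ennreal_ofReal)
            fun x hx => ?_
          refine ENNReal.ofReal_le_ofReal ?_
          have hxpos : (0:ℝ) < x := lt_of_lt_of_le hpos hx.1
          exact one_div_le_one_div_of_le hxpos hx.2
  · intro r hr
    rcases Set.mem_iUnion.mp hr with ⟨n, hn⟩
    exact (hQ _ (hQc n)).2 r hn

/-- Lemma 6, abstracted: if `T` is nondecreasing and unbounded and
`σ = limsup α(log T r) / β(log γ r)` is finite, then for every `μ < σ` there is a set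
`I ⊂ (1,∞)` of infinite logarithmic measure on which `α(log T r) > μ·β(log γ r)`. -/
theorem order_lower_bound_on_large_set (T α β γ : ℝ → ℝ)
    (hT : ∀ x y : ℝ, 0 < x → x ≤ y → T x ≤ T y)
    (hTtop : Tendsto T atTop atTop)
    (hα : Monotone α) (hαtop : Tendsto α atTop atTop) (hα0 : ∀ x, 0 ≤ α x)
    (hβ : Monotone β) (hβtop : Tendsto β atTop atTop) (hβ0 : ∀ x, 0 ≤ β x)
    (hγ : Monotone γ) (hγtop : Tendsto γ atTop atTop) (hγ0 : ∀ x, 0 ≤ γ x)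
    (hγsub : ∀ a b : ℝ, γ (a + b) ≤ γ a + γ b)
    (hβslow : ∀ C : ℝ, Tendsto (fun x => β (x + C) / β x) atTop (𝓝 1))
    (σ : ℝ)
    (hσ : Filter.limsup (fun r => α (Real.log (T r)) / β (Real.log (γ r))) atTop = σ) :
    ∀ μ < σ, ∃ I : Set ℝ, I ⊆ Set.Ioi 1 ∧
      (∫⁻ r in I, ENNReal.ofReal (1 / r)) = ⊤ ∧
      ∀ r ∈ I, μ * β (Real.log (γ r)) < α (Real.log (T r)) := by
  intro μ hμ
  have hαT : Tendsto (fun x => α (Real.log (T x))) atTop atTop :=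
    hαtop.comp (Real.tendsto_log_atTop.comp hTtop)
  have hlogγ : Tendsto (fun x => Real.log (γ x)) atTop atTop :=
    Real.tendsto_log_atTop.comp hγtop
  have hβγ : Tendsto (fun x => β (Real.log (γ x))) atTop atTop :=
    hβtop.comp hlogγ
  rcases le_or_gt μ 0 with hμ0 | hμ0
  · -- trivial case: μ ≤ 0
    have hev : ∀ᶠ x in atTop, 2 ≤ x ∧
        ∀ r ∈ Set.Icc x (2 * x), μ * β (Real.log (γ r)) < α (Real.log (T r)) := by
      have h1 : ∀ᶠ x in atTop, (1:ℝ) ≤ α (Real.log (T x)) := hαT.eventually_ge_atTop 1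
      rw [eventually_atTop] at h1
      obtain ⟨N, hN⟩ := h1
      filter_upwards [eventually_ge_atTop (max 2 N)] with x hx
      refine ⟨le_trans (le_max_left _ _) hx, fun r hr => ?_⟩
      have hrN : N ≤ r := le_trans (le_trans (le_max_right _ _) hx) hr.1
      have := hN r hrN
      have hβr := hβ0 (Real.log (γ r))
      nlinarith
    exact aux_union_of_frequently _ _ hev.frequently fun x hx => hx
  · -- main case: 0 < μ < σ
    set μ' := (μ + σ) / 2 with hμ'def
    have hμμ' : μ < μ' := by simp only [hμ'def]; linarith
    have hμ'σ : μ' < σ := by simp only [hμ'def]; linarith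
    have hμ'pos : 0 < μ' := lt_trans hμ0 hμμ'
    have hratio : 1 < μ' / μ := (one_lt_div hμ0).mpr hμμ'
    -- frequently the ratio exceeds μ'
    have hcobdd : IsCoboundedUnder (· ≤ ·) atTop
        (fun r => α (Real.log (T r)) / β (Real.log (γ r))) :=
      isCoboundedUnder_le_of_le atTop (x := 0)
        fun r => div_nonneg (hα0 _) (hβ0 _)
    have hfreq : ∃ᶠ r in atTop,
        μ' < α (Real.log (T r)) / β (Real.log (γ r)) :=
      frequently_lt_of_lt_limsup hcobdd (hσ ▸ hμ'σ)
    -- eventual side conditions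
    have hslow : ∀ᶠ x in atTop,
        β (Real.log (γ x) + Real.log 2) < (μ' / μ) * β (Real.log (γ x)) := by
      have h1 : ∀ᶠ y in atTop, β (y + Real.log 2) / β y < μ' / μ :=
        (hβslow (Real.log 2)).eventually_lt_const hratio
      have h2 : ∀ᶠ y in atTop, (0:ℝ) < β y := hβtop.eventually_gt_atTop 0
      have h3 : ∀ᶠ y in atTop,
          β (y + Real.log 2) < (μ' / μ) * β y := by
        filter_upwards [h1, h2] with y hy hy'
        calc β (y + Real.log 2) = (β (y + Real.log 2) / β y) * β y := by
              field_simp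
          _ < (μ' / μ) * β y := by
              exact mul_lt_mul_of_pos_right hy hy'
      exact hlogγ.eventually h3
    have hγ1 : ∀ᶠ x in atTop, (1:ℝ) ≤ γ x := hγtop.eventually_ge_atTop 1
    have hT1 : ∀ᶠ x in atTop, (1:ℝ) ≤ T x := hTtop.eventually_ge_atTop 1
    have hβpos : ∀ᶠ x in atTop, (0:ℝ) < β (Real.log (γ x)) :=
      hβγ.eventually_gt_atTop 0
    have hev2 : ∀ᶠ x in atTop, (2:ℝ) ≤ x := eventually_ge_atTop 2
    have hfreq' : ∃ᶠ x in atTop,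
        (μ' < α (Real.log (T x)) / β (Real.log (γ x)) ∧
          β (Real.log (γ x) + Real.log 2) < (μ' / μ) * β (Real.log (γ x)) ∧
          1 ≤ γ x ∧ 1 ≤ T x ∧ 0 < β (Real.log (γ x)) ∧ 2 ≤ x) := by
      refine hfreq.and_eventually ?_
      filter_upwards [hslow, hγ1, hT1, hβpos, hev2] with x h1 h2 h3 h4 h5
      exact ⟨h1, h2, h3, h4, h5⟩
    refine aux_union_of_frequently _ _ hfreq' ?_
    rintro x ⟨hratio', hslowx, hγx, hTx, hβx, hx2⟩
    refine ⟨hx2, fun r hr => ?_⟩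
    have hxpos : (0:ℝ) < x := by linarith
    have hrx : x ≤ r := hr.1
    have hrpos : 0 < r := lt_of_lt_of_le hxpos hrx
    -- α (log T r) ≥ α (log T x)
    have hTxr : T x ≤ T r := hT x r hxpos hrx
    have hTxpos : (0:ℝ) < T x := by linarith
    have hα_le : α (Real.log (T x)) ≤ α (Real.log (T r)) :=
      hα (Real.log_le_log hTxpos hTxr)
    -- from the ratio bound
    have hαx : μ' * β (Real.log (γ x)) < α (Real.log (T x)) := by
      calc μ' * β (Real.log (γ x)) < (α (Real.log (T x)) / β (Real.log (γ x)))
            * β (Real.log (γ x)) := mul_lt_mul_of_pos_right hratio' hβx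
        _ = α (Real.log (T x)) := by field_simp
    -- γ r ≤ 2 γ x
    have hγr2 : γ r ≤ 2 * γ x := by
      have h1 : γ r ≤ γ (x + x) := hγ (by linarith [hr.2])
      have h2 := hγsub x x
      linarith
    have hγrpos : (0:ℝ) < γ r := lt_of_lt_of_le one_pos (le_trans hγx (hγ hrx))
    have hlog_le : Real.log (γ r) ≤ Real.log (γ x) + Real.log 2 := by
      have := Real.log_le_log hγrpos hγr2
      rwa [Real.log_mul two_ne_zero (by linarith), add_comm] at this
    -- chain of inequalities
    have hβle : β (Real.log (γ r)) ≤ β (Real.log (γ x) + Real.log 2) := hβ hlog_le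
    have key : μ * β (Real.log (γ r)) < μ' * β (Real.log (γ x)) := by
      calc μ * β (Real.log (γ r)) ≤ μ * β (Real.log (γ x) + Real.log 2) :=
            mul_le_mul_of_nonneg_left hβle (le_of_lt hμ0)
        _ < μ * ((μ' / μ) * β (Real.log (γ x))) :=
            mul_lt_mul_of_pos_left hslowx hμ0
        _ = μ' * β (Real.log (γ x)) := by field_simp
    linarith
end
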